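/- arXiv:1910.03403 — 2 statements merged into one kernel-verified Lean document; each statement's English description precedes it below -/
import Mathlib

section
/- Let A be an abelian category, f : X₁ → X₂ a monomorphism, and m : X₂ → I a monomorphism in A. Then there is a short exact sequence in the morphism category Mor(A): 0 → (X₁ →^f X₂) → (X₁ ⊕ X₂ →^h I ⊕ X₂) → (X₂ →^m I) → 0, where h is the diagonal matrix diag(m∘f, 1), the left map is ([1,f]ᵗ, [m,1]ᵗ) and the right map is ([-f,1], [-1,m]), and both component rows are split short exact sequences in A. -/
open CategoryTheory CategoryTheory.Limits


noncomputable def splitTop {A : Type*} [Category A] [Abelian A] {X₁ X₂ : A} (f : X₁ ⟶ X₂) :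
    (ShortComplex.mk (biprod.lift (𝟙 X₁) f) (biprod.desc (-f) (𝟙 X₂))
      (by simp [biprod.lift_desc])).Splitting where
  r := biprod.fst
  s := biprod.inr
  f_r := by simp
  s_g := by simp
  id := by ext <;> simp

noncomputable def splitBot {A : Type*} [Category A] [Abelian A] {X₂ I : A} (m : X₂ ⟶ I) :
    (ShortComplex.mk (biprod.lift m (𝟙 X₂)) (biprod.desc (-𝟙 I) m)
      (by simp [biprod.lift_desc])).Splitting where
  r := biprod.snd
  s := -biprod.inl
  f_r := by simp
  s_g := by simp
  id := by ext <;> simp [sub_eq_iff_eq_add]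

/-- For monomorphisms `f : X₁ → X₂` and `m : X₂ → I` in an abelian category `A` there is a
short exact sequence `0 → (X₁ →f X₂) → (X₁⊕X₂ →h I⊕X₂) → (X₂ →m I) → 0` in the morphism
category, with `h = diag(m∘f, 1)`, left map `([1,f]ᵗ, [m,1]ᵗ)` and right map
`([-f,1], [-1,m])`, and both component rows are split short exact in `A`. -/
theorem exists_shortExact_injective_copresentation {A : Type*} [Category A] [Abelian A]
    {X₁ X₂ I : A} (f : X₁ ⟶ X₂) (m : X₂ ⟶ I) [Mono f] [Mono m] :
    ∃ (wt : biprod.lift (𝟙 X₁) f ≫ biprod.desc (-f) (𝟙 X₂) = 0)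
      (wb : biprod.lift m (𝟙 X₂) ≫ biprod.desc (-𝟙 I) m = 0),
      -- the top component row `0 → X₁ → X₁ ⊕ X₂ → X₂ → 0` is split short exact
      (ShortComplex.mk (biprod.lift (𝟙 X₁) f) (biprod.desc (-f) (𝟙 X₂)) wt).ShortExact ∧
      Nonempty (ShortComplex.mk (biprod.lift (𝟙 X₁) f) (biprod.desc (-f) (𝟙 X₂)) wt).Splitting ∧
      -- the bottom component row `0 → X₂ → I ⊕ X₂ → I → 0` is split short exact
      (ShortComplex.mk (biprod.lift m (𝟙 X₂)) (biprod.desc (-𝟙 I) m) wb).ShortExact ∧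
      Nonempty (ShortComplex.mk (biprod.lift m (𝟙 X₂)) (biprod.desc (-𝟙 I) m) wb).Splitting ∧
      -- the two squares of the sequence in the morphism category commute
      (f ≫ biprod.lift m (𝟙 X₂)
        = biprod.lift (𝟙 X₁) f ≫ biprod.map (f ≫ m) (𝟙 X₂)) ∧
      (biprod.map (f ≫ m) (𝟙 X₂) ≫ biprod.desc (-𝟙 I) m
        = biprod.desc (-f) (𝟙 X₂) ≫ m) := by
  have wt : biprod.lift (𝟙 X₁) f ≫ biprod.desc (-f) (𝟙 X₂) = 0 := by
    simp [biprod.lift_desc]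
  have wb : biprod.lift m (𝟙 X₂) ≫ biprod.desc (-𝟙 I) m = 0 := by
    simp [biprod.lift_desc]
  refine ⟨wt, wb, ?_, ?_, ?_, ?_, ?_, ?_⟩
  case _ =>
    exact (splitTop f).shortExact
  case _ => exact ⟨splitTop f⟩
  case _ => exact (splitBot m).shortExact
  case _ => exact ⟨splitBot m⟩
  case _ => ext <;> simp
  case _ => ext <;> simp
end

section
/- Let A be an abelian category and X, Y objects of A. Every short exact sequence 0 → (X →^1 X) → (Z₁ →^h Z₂) → (Y₁ →^g Y₂) → 0 in Mor(A) with h, g monomorphisms, whose component rows are split, has the property that the injection (X→^1 X) → (Z₁→^h Z₂) is a split monomorphism in Mor(A). In particular, (X →^1 X) is an injective object with respect to the componentwise-split exact structure on the monomorphism category. -/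
open CategoryTheory CategoryTheory.Limits

/-- The object `(X →¹ X)` is injective for the componentwise-split exact structure on the
monomorphism category: for every short exact sequence
`0 → (X →¹ X) → (Z₁ →h Z₂) → (Y₁ →g Y₂) → 0` in the morphism category with `h, g`
monomorphisms and split component rows, the inclusion `(X →¹ X) → (Z₁ →h Z₂)` is a split
monomorphism in the morphism category. -/
theorem identity_object_injective_cw {A : Type*} [Category A] [Abelian A]
    {X Z₁ Z₂ Y₁ Y₂ : A} (h : Z₁ ⟶ Z₂) (g : Y₁ ⟶ Y₂) [Mono h] [Mono g]
    (φ₁ : X ⟶ Z₁) (φ₂ : X ⟶ Z₂) (ψ₁ : Z₁ ⟶ Y₁) (ψ₂ : Z₂ ⟶ Y₂)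
    (sq₁ : 𝟙 X ≫ φ₂ = φ₁ ≫ h) (sq₂ : h ≫ ψ₂ = ψ₁ ≫ g)
    (w₁ : φ₁ ≫ ψ₁ = 0) (w₂ : φ₂ ≫ ψ₂ = 0)
    (hrow₁ : (ShortComplex.mk φ₁ ψ₁ w₁).ShortExact)
    (hsplit₁ : Nonempty (ShortComplex.mk φ₁ ψ₁ w₁).Splitting)
    (hrow₂ : (ShortComplex.mk φ₂ ψ₂ w₂).ShortExact)
    (hsplit₂ : Nonempty (ShortComplex.mk φ₂ ψ₂ w₂).Splitting) :
    ∃ (r₁ : Z₁ ⟶ X) (r₂ : Z₂ ⟶ X),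
      h ≫ r₂ = r₁ ≫ 𝟙 X ∧ φ₁ ≫ r₁ = 𝟙 X ∧ φ₂ ≫ r₂ = 𝟙 X := by
  obtain ⟨s⟩ := hsplit₂
  refine ⟨h ≫ s.r, s.r, by simp, ?_, s.f_r⟩
  have : φ₁ ≫ h = φ₂ := by simpa using sq₁.symm
  rw [← Category.assoc, this, s.f_r]
end
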